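/- Take a_n = 1/(100 n³) and N = 4. Then for every integer k ≥ 1 and every constant C > 0 there exists a function f : [0,1) → ℝ of bounded variation with Var(f) + sup_{x∈[0,1)}|f(x)| ≤ 3 such that Var(Lᵏ f) > C; that is, Lᵏ does not act continuously on the space of bounded variation functions. -/

import Mathlib

/-!
The density `v_n' = a_n (2 + cos (4π n⁴ x))` oscillates between `a_n` and `3 a_n` at the
`4 n⁴` points `i / (4 n⁴)`, so its variation is at least `(4 n⁴ - 1) · 2 a_n`, of order `n`
for `a_n = 1/(100 n³)`. Let `I = v_n([0,1)) = [b_{n-1}, b_{n-1} + 2 a_n)`. The branches are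
arranged so that on indicators of subsets of `u_1([0,1))` only `u_1` contributes, hence
`L 1_{u_1(A)} = (|J|/N) 1_A` on `[0,1)`, while `L 1_I = v_n'`. Starting from the indicator of
the interval `u_1^K(I)`, whose variation plus sup norm is at most `3`, we get
`L^{K+1} f = (|J|/N)^K v_n'`, whose variation is unbounded as `n → ∞`.
-/

open MeasureTheory Set Filter

noncomputable section

namespace Gouezel

/-- `b a n = 4 * ∑_{k=1}^n a_k` (left endpoints of the intervals `I_n`). -/
def b (a : ℕ → ℝ) (n : ℕ) : ℝ := 4 * ∑ k ∈ Finset.range n, a (k + 1)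

/-- `b_∞ = 4 * ∑_{n=1}^∞ a_n`. -/
def binf (a : ℕ → ℝ) : ℝ := 4 * ∑' n : ℕ, a (n + 1)

/-- The length `|J| = 1 - b_∞` of the interval `J = [b_∞, 1)`. -/
def lenJ (a : ℕ → ℝ) : ℝ := 1 - binf a

/-- `v_n'(x) = a_n (1 + 2 cos²(2π n⁴ x))`. -/
def vd (a : ℕ → ℝ) (n : ℕ) (x : ℝ) : ℝ :=
  a n * (1 + 2 * Real.cos (2 * Real.pi * (n : ℝ) ^ 4 * x) ^ 2)

/-- `w_n'(x) = a_n (1 + 2 sin²(2π n⁴ x))`. -/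
def wd (a : ℕ → ℝ) (n : ℕ) (x : ℝ) : ℝ :=
  a n * (1 + 2 * Real.sin (2 * Real.pi * (n : ℝ) ^ 4 * x) ^ 2)

/-- The inverse branch `v_n(x) = b_{n-1} + ∫_0^x v_n'(t) dt`. -/
def v (a : ℕ → ℝ) (n : ℕ) (x : ℝ) : ℝ := b a (n - 1) + ∫ t in (0:ℝ)..x, vd a n t

/-- The inverse branch `w_n(x) = b_{n-1} + 2 a_n + ∫_0^x w_n'(t) dt`. -/
def w (a : ℕ → ℝ) (n : ℕ) (x : ℝ) : ℝ :=
  b a (n - 1) + 2 * a n + ∫ t in (0:ℝ)..x, wd a n t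

/-- The affine inverse branches `u_j(x) = b_∞ + (j-1)|J|/N + (|J|/N) x`, `1 ≤ j ≤ N`. -/
def u (a : ℕ → ℝ) (N : ℕ) (j : ℕ) (x : ℝ) : ℝ :=
  binf a + ((j : ℝ) - 1) * (lenJ a / N) + (lenJ a / N) * x

/-- The transfer operator on complex-valued functions. -/
def L (a : ℕ → ℝ) (N : ℕ) (f : ℝ → ℂ) (x : ℝ) : ℂ :=
  (∑' n : ℕ, ((vd a (n + 1) x : ℂ) * f (v a (n + 1) x)
      + (wd a (n + 1) x : ℂ) * f (w a (n + 1) x)))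
    + ((lenJ a / (N : ℝ) : ℝ) : ℂ) * ∑ j ∈ Finset.range N, f (u a N (j + 1) x)

/-- The transfer operator on real-valued functions. -/
def LR (a : ℕ → ℝ) (N : ℕ) (f : ℝ → ℝ) (x : ℝ) : ℝ :=
  (∑' n : ℕ, (vd a (n + 1) x * f (v a (n + 1) x) + wd a (n + 1) x * f (w a (n + 1) x)))
    + (lenJ a / N) * ∑ j ∈ Finset.range N, f (u a N (j + 1) x)

/-- The part `L_n` of the transfer operator coming from the branches `v_n, w_n`. -/
def Ln (a : ℕ → ℝ) (n : ℕ) (f : ℝ → ℂ) (x : ℝ) : ℂ :=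
  (vd a n x : ℂ) * f (v a n x) + (wd a n x : ℂ) * f (w a n x)

/-- Sup norm of `f` on `[0,1)`. -/
def supNorm (f : ℝ → ℂ) : ℝ := ⨆ x : Ico (0:ℝ) 1, ‖f x.1‖

/-- Best Lipschitz constant of `f` on `[0,1)` (the term at `x = y` is `0/0 = 0`). -/
def lipConst (f : ℝ → ℂ) : ℝ :=
  ⨆ p : Ico (0:ℝ) 1 × Ico (0:ℝ) 1, ‖f p.1.1 - f p.2.1‖ / |p.1.1 - p.2.1|

/-- Lipschitz norm `‖f‖_Lip = sup|f| + Lip(f)` on `[0,1)`. -/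
def lipNorm (f : ℝ → ℂ) : ℝ := supNorm f + lipConst f

/-- `f` is bounded and Lipschitz on `[0,1)`. -/
def BddLip (f : ℝ → ℂ) : Prop :=
  ∃ K : ℝ, (∀ x ∈ Ico (0:ℝ) 1, ‖f x‖ ≤ K) ∧
    ∀ x ∈ Ico (0:ℝ) 1, ∀ y ∈ Ico (0:ℝ) 1, ‖f x - f y‖ ≤ K * |x - y|

/-- The specific choice `a_n = 1/(100 n³)`. -/
def aa (n : ℕ) : ℝ := 1 / (100 * (n : ℝ) ^ 3)

/-- Standing hypotheses on the sequence `(a_n)`: positivity and `∑ a_n < 1/4`. -/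
def StdHyp (a : ℕ → ℝ) : Prop :=
  (∀ n : ℕ, 1 ≤ n → 0 < a n) ∧ Summable (fun n : ℕ => a (n + 1)) ∧
    (∑' n : ℕ, a (n + 1)) < 1 / 4

/-- `T : [0,1) → [0,1)` has the maps `v_n, w_n` (`n ≥ 1`) and `u_j` (`1 ≤ j ≤ N`)
as inverse branches. -/
def InverseBranches (a : ℕ → ℝ) (N : ℕ) (T : ℝ → ℝ) : Prop :=
  MapsTo T (Ico (0:ℝ) 1) (Ico (0:ℝ) 1) ∧
    ∀ x ∈ Ico (0:ℝ) 1,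
      (∀ n : ℕ, 1 ≤ n → T (v a n x) = x ∧ T (w a n x) = x) ∧
      (∀ j : ℕ, 1 ≤ j → j ≤ N → T (u a N j x) = x)

open Real

section Variation

variable {α : Type*} [LinearOrder α] {f : α → ℝ} {s : Set α} {m M : ℝ}

theorem eVariationOn_le_of_monotoneOn (hf : MonotoneOn f s) (hfs : MapsTo f s (Icc m M)) :
    eVariationOn f s ≤ ENNReal.ofReal (M - m) :=
  (eVariationOn.comp_le_of_monotoneOn id f hf hfs).trans_eq (eVariationOn_id_Icc m M)

theorem eVariationOn_le_of_antitoneOn (hf : AntitoneOn f s) (hfs : MapsTo f s (Icc m M)) :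
    eVariationOn f s ≤ ENNReal.ofReal (M - m) :=
  (eVariationOn.comp_le_of_antitoneOn id f hf hfs).trans_eq (eVariationOn_id_Icc m M)

theorem eVariationOn_indicator_Ico_le (p q : α) :
    eVariationOn ((Ico p q).indicator (1 : α → ℝ)) s ≤ 2 := by
  have hmono : Monotone ((Ici p).indicator (1 : α → ℝ)) := by
    intro x y hxy
    by_cases hx : p ≤ x
    · simp [indicator_of_mem (mem_Ici.2 hx), indicator_of_mem (mem_Ici.2 (hx.trans hxy))]
    · simp [indicator_of_notMem (show x ∉ Ici p from hx), indicator_nonneg]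
  have hanti : Antitone ((Iio q).indicator (1 : α → ℝ)) := by
    intro x y hxy
    by_cases hy : y < q
    · simp [indicator_of_mem (mem_Iio.2 hy), indicator_of_mem (mem_Iio.2 (hxy.trans_lt hy))]
    · simp [indicator_of_notMem (show y ∉ Iio q from hy), indicator_nonneg]
  have hmaps : ∀ t : Set α, MapsTo (t.indicator (1 : α → ℝ)) s (Icc 0 1) := fun t x _ =>
    ⟨indicator_nonneg (fun _ _ => zero_le_one) x, indicator_le_self' (fun _ _ => zero_le_one) x⟩
  have hnorm : ∀ t : Set α, ∀ x ∈ s, ‖t.indicator (1 : α → ℝ) x‖ₑ ≤ 1 := fun t x _ => by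
    by_cases hx : x ∈ t <;> simp [hx]
  rw [← Ici_inter_Iio, inter_indicator_one]
  calc eVariationOn ((Ici p).indicator 1 * (Iio q).indicator (1 : α → ℝ)) s
      ≤ 1 * eVariationOn ((Iio q).indicator (1 : α → ℝ)) s
        + 1 * eVariationOn ((Ici p).indicator (1 : α → ℝ)) s :=
        eVariation_mul_le (hnorm _) (hnorm _)
    _ ≤ ENNReal.ofReal (1 - 0) + ENNReal.ofReal (1 - 0) := by
        rw [one_mul, one_mul]
        exact add_le_add (eVariationOn_le_of_antitoneOn (hanti.antitoneOn s) (hmaps _))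
          (eVariationOn_le_of_monotoneOn (hmono.monotoneOn s) (hmaps _))
    _ = 2 := by norm_num

end Variation

section Branches

variable (a : ℕ → ℝ)

lemma b_succ (n : ℕ) : b a (n + 1) = b a n + 4 * a (n + 1) := by
  rw [b, b, Finset.sum_range_succ]; ring

def freq (n : ℕ) : ℝ := 4 * π * n ^ 4

lemma freq_pos {n : ℕ} (hn : n ≠ 0) : 0 < freq n := by
  unfold freq; positivity

lemma sin_freq_sub (n : ℕ) (y : ℝ) : sin (freq n - y) = - sin y := by
  have hs : sin (freq n) = 0 := by
    rw [show freq n = ((4 * n ^ 4 : ℕ) : ℝ) * π by unfold freq; push_cast; ring]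
    exact sin_nat_mul_pi _
  have hc : cos (freq n) = 1 := by
    rw [show freq n = ((2 * n ^ 4 : ℕ) : ℝ) * (2 * π) by unfold freq; push_cast; ring]
    exact cos_nat_mul_two_pi _
  rw [sin_sub, hs, hc]
  ring

lemma vd_eq (n : ℕ) (x : ℝ) : vd a n x = a n * (2 + cos (freq n * x)) := by
  rw [vd, freq, show 4 * π * (n : ℝ) ^ 4 * x = 2 * (2 * π * n ^ 4 * x) by ring, cos_two_mul]
  ring

lemma wd_eq (n : ℕ) (x : ℝ) : wd a n x = a n * (2 - cos (freq n * x)) := by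
  rw [wd, freq, show 4 * π * (n : ℝ) ^ 4 * x = 2 * (2 * π * n ^ 4 * x) by ring, cos_two_mul,
    sin_sq]
  ring

def antideriv (ε : ℝ) (n : ℕ) (x : ℝ) : ℝ := 2 * x + ε * (sin (freq n * x) / freq n)

lemma integral_two_add_cos {n : ℕ} (hn : n ≠ 0) (ε x : ℝ) :
    ∫ t in (0 : ℝ)..x, (2 + ε * cos (freq n * t)) = antideriv ε n x := by
  rw [intervalIntegral.integral_add intervalIntegrable_const
    ((by fun_prop : Continuous fun t => ε * cos (freq n * t)).intervalIntegrable _ _),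
    intervalIntegral.integral_const_mul,
    intervalIntegral.integral_comp_mul_left (fun t => cos t) (freq_pos hn).ne']
  simp only [intervalIntegral.integral_const, smul_eq_mul, integral_cos, antideriv, sub_zero,
    mul_zero, sin_zero]
  ring

lemma antideriv_mem_Ico {n : ℕ} (hn : n ≠ 0) {ε : ℝ} (hε : |ε| ≤ 1) {x : ℝ}
    (hx : x ∈ Ico (0 : ℝ) 1) : antideriv ε n x ∈ Ico 0 2 := by
  have hc := freq_pos hn
  have hbound : ∀ t, 0 ≤ t → |ε * (sin (freq n * t) / freq n)| ≤ t := fun t ht => by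
    rw [abs_mul, abs_div, abs_of_pos hc]
    calc |ε| * (|sin (freq n * t)| / freq n) ≤ 1 * (|freq n * t| / freq n) :=
          mul_le_mul hε (div_le_div_of_nonneg_right abs_sin_le_abs hc.le) (by positivity)
            zero_le_one
      _ = t := by rw [abs_of_nonneg (by positivity)]; field_simp
  have hsymm : antideriv ε n x = 2 - antideriv ε n (1 - x) := by
    simp only [antideriv, mul_sub, mul_one, sin_freq_sub]
    ring
  obtain ⟨hx0, hx1⟩ := hx
  have h0 := abs_le.1 (hbound x hx0)
  have h1 := abs_le.1 (hbound (1 - x) (by linarith))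
  constructor
  · unfold antideriv; linarith
  · rw [hsymm]; unfold antideriv; linarith

lemma v_succ_eq (n : ℕ) (x : ℝ) :
    v a (n + 1) x = b a n + a (n + 1) * antideriv 1 (n + 1) x := by
  rw [v, ← integral_two_add_cos n.succ_ne_zero, ← intervalIntegral.integral_const_mul]
  simp [vd_eq]

lemma w_succ_eq (n : ℕ) (x : ℝ) :
    w a (n + 1) x = b a n + 2 * a (n + 1) + a (n + 1) * antideriv (-1) (n + 1) x := by
  rw [w, ← integral_two_add_cos n.succ_ne_zero, ← intervalIntegral.integral_const_mul]
  simp [wd_eq, sub_eq_add_neg]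

lemma mapsTo_v (n : ℕ) (hpos : 0 < a (n + 1)) :
    MapsTo (v a (n + 1)) (Ico 0 1) (Ico (b a n) (b a n + 2 * a (n + 1))) := fun x hx => by
  obtain ⟨h0, h2⟩ := antideriv_mem_Ico n.succ_ne_zero (ε := 1) (by simp) hx
  rw [v_succ_eq]
  constructor <;> nlinarith

lemma mapsTo_w (n : ℕ) (hpos : 0 < a (n + 1)) :
    MapsTo (w a (n + 1)) (Ico 0 1) (Ico (b a n + 2 * a (n + 1)) (b a (n + 1))) := fun x hx => by
  obtain ⟨h0, h2⟩ := antideriv_mem_Ico n.succ_ne_zero (ε := -1) (by simp) hx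
  rw [w_succ_eq, b_succ]
  constructor <;> nlinarith

lemma u_succ_eq (N j : ℕ) (x : ℝ) :
    u a N (j + 1) x = binf a + j * (lenJ a / N) + lenJ a / N * x := by
  simp [u]

end Branches

section StdHyp

variable {a : ℕ → ℝ} (ha : StdHyp a)
include ha

lemma b_mono : Monotone (b a) :=
  monotone_nat_of_le_succ fun n => by
    rw [b_succ]; linarith [ha.1 (n + 1) n.succ_pos]

lemma b_nonneg (n : ℕ) : 0 ≤ b a n := by
  simpa [b] using b_mono ha n.zero_le

lemma b_le_binf (n : ℕ) : b a n ≤ binf a := by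
  unfold b binf
  gcongr
  exact ha.2.1.sum_le_tsum _ fun i _ => (ha.1 (i + 1) i.succ_pos).le

lemma binf_nonneg : 0 ≤ binf a := (b_nonneg ha 0).trans (b_le_binf ha 0)

lemma lenJ_pos : 0 < lenJ a := by
  unfold lenJ binf; linarith [ha.2.2]

lemma mapsTo_v_w_Ico_b (n : ℕ) :
    MapsTo (v a (n + 1)) (Ico 0 1) (Ico (b a n) (b a (n + 1))) ∧
      MapsTo (w a (n + 1)) (Ico 0 1) (Ico (b a n) (b a (n + 1))) := by
  have hpos := ha.1 (n + 1) n.succ_pos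
  refine ⟨(mapsTo_v a n hpos).mono_right (Ico_subset_Ico_right ?_),
    (mapsTo_w a n hpos).mono_right (Ico_subset_Ico_left (by linarith))⟩
  rw [b_succ]; linarith

lemma Ico_b_subset_Ico_binf (n : ℕ) : Ico (b a n) (b a (n + 1)) ⊆ Ico 0 (binf a) :=
  Ico_subset_Ico (b_nonneg ha n) (b_le_binf ha _)

lemma mapsTo_u_of_lt {N j : ℕ} (hj : j < N) :
    MapsTo (u a N (j + 1)) (Ico 0 1) (Ico (binf a) 1) := fun x ⟨hx0, hx1⟩ => by
  have hN : (0 : ℝ) < N := by exact_mod_cast (j.zero_le.trans_lt hj)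
  have hr : 0 < lenJ a / N := div_pos (lenJ_pos ha) hN
  have hjN : (j : ℝ) + 1 ≤ N := by exact_mod_cast hj
  have hNr : N * (lenJ a / N) = 1 - binf a := by field_simp; rfl
  rw [u_succ_eq]
  constructor <;> nlinarith

lemma binf_lt_one : binf a < 1 := by
  linarith [lenJ_pos ha, show lenJ a = 1 - binf a from rfl]

lemma mapsTo_v_w_Ico_zero_one (n : ℕ) :
    MapsTo (v a (n + 1)) (Ico 0 1) (Ico 0 1) ∧ MapsTo (w a (n + 1)) (Ico 0 1) (Ico 0 1) := by
  have hsub : Ico (b a n) (b a (n + 1)) ⊆ Ico 0 1 :=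
    (Ico_b_subset_Ico_binf ha n).trans (Ico_subset_Ico_right (binf_lt_one ha).le)
  exact ⟨(mapsTo_v_w_Ico_b ha n).1.mono_right hsub, (mapsTo_v_w_Ico_b ha n).2.mono_right hsub⟩

lemma LR_eqOn_of_eqOn (N : ℕ) {f g : ℝ → ℝ} (hfg : EqOn f g (Ico 0 1)) :
    EqOn (LR a N f) (LR a N g) (Ico 0 1) := fun x hx => by
  have hu : ∀ j ∈ Finset.range N, u a N (j + 1) x ∈ Ico 0 1 := fun j hj =>
    Ico_subset_Ico_left (binf_nonneg ha) (mapsTo_u_of_lt ha (Finset.mem_range.1 hj) hx)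
  unfold LR
  rw [tsum_congr fun m => by
      rw [hfg ((mapsTo_v_w_Ico_zero_one ha m).1 hx), hfg ((mapsTo_v_w_Ico_zero_one ha m).2 hx)],
    Finset.sum_congr rfl fun j hj => hfg (hu j hj)]

lemma LR_indicator_eqOn_of_subset_Ico_binf {N : ℕ} (hN : 0 < N) {S : Set ℝ}
    (hS : S ⊆ Ico (binf a) (binf a + lenJ a / N)) (c : ℝ) :
    EqOn (LR a N (S.indicator fun _ => c))
      ((u a N 1 ⁻¹' S).indicator fun _ => lenJ a / N * c) (Ico 0 1) := fun x hx => by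
  have hr : 0 < lenJ a / N := div_pos (lenJ_pos ha) (by exact_mod_cast hN)
  have hv : ∀ m, S.indicator (fun _ => c) (v a (m + 1) x) = 0 := fun m =>
    indicator_of_notMem (fun h => ((mapsTo_v_w_Ico_b ha m).1 hx).2.not_ge
      ((hS h).1.trans' (b_le_binf ha _))) _
  have hw : ∀ m, S.indicator (fun _ => c) (w a (m + 1) x) = 0 := fun m =>
    indicator_of_notMem (fun h => ((mapsTo_v_w_Ico_b ha m).2 hx).2.not_ge
      ((hS h).1.trans' (b_le_binf ha _))) _
  have hu : ∀ j ∈ Finset.range N, j ≠ 0 → u a N (j + 1) x ∉ S := fun j _ hj h => by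
    have hj1 : (1 : ℝ) ≤ j := by exact_mod_cast Nat.one_le_iff_ne_zero.2 hj
    have := (hS h).2
    rw [u_succ_eq] at this
    nlinarith [hx.1]
  unfold LR
  rw [Finset.sum_eq_single_of_mem 0 (Finset.mem_range.2 hN)
      fun j hj h0 => indicator_of_notMem (hu j hj h0) _]
  simp only [hv, hw, mul_zero, add_zero, tsum_zero, zero_add]
  by_cases h : u a N 1 x ∈ S <;> simp [h]

lemma LR_indicator_Ico_b_eqOn (N n : ℕ) (c : ℝ) :
    EqOn (LR a N ((Ico (b a n) (b a n + 2 * a (n + 1))).indicator fun _ => c))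
      (fun x => c * vd a (n + 1) x) (Ico 0 1) := fun x hx => by
  have hpos := ha.1 (n + 1) n.succ_pos
  have hsub : Ico (b a n) (b a n + 2 * a (n + 1)) ⊆ Ico (b a n) (b a (n + 1)) :=
    Ico_subset_Ico_right (by rw [b_succ]; linarith)
  have hother : ∀ m ≠ n, v a (m + 1) x ∉ Ico (b a n) (b a n + 2 * a (n + 1)) ∧
      w a (m + 1) x ∉ Ico (b a n) (b a n + 2 * a (n + 1)) := fun m hmn => by
    have hdisj : Disjoint (Ico (b a m) (b a (m + 1))) (Ico (b a n) (b a (n + 1))) := by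
      simpa using (b_mono ha).pairwise_disjoint_on_Ico_succ hmn
    exact ⟨fun h => hdisj.notMem_of_mem_left ((mapsTo_v_w_Ico_b ha m).1 hx) (hsub h),
      fun h => hdisj.notMem_of_mem_left ((mapsTo_v_w_Ico_b ha m).2 hx) (hsub h)⟩
  have hu : ∀ j ∈ Finset.range N, u a N (j + 1) x ∉ Ico (b a n) (b a n + 2 * a (n + 1)) :=
    fun j hj h => (hsub h).2.not_ge ((b_le_binf ha _).trans
      (mapsTo_u_of_lt ha (Finset.mem_range.1 hj) hx).1)
  have hv : v a (n + 1) x ∈ Ico (b a n) (b a n + 2 * a (n + 1)) := mapsTo_v a n hpos hx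
  have hw : w a (n + 1) x ∉ Ico (b a n) (b a n + 2 * a (n + 1)) :=
    fun h => h.2.not_ge (mapsTo_w a n hpos hx).1
  unfold LR
  rw [tsum_eq_single n fun m hm => by
      rw [indicator_of_notMem (hother m hm).1, indicator_of_notMem (hother m hm).2]; ring,
    Finset.sum_eq_zero fun j hj => indicator_of_notMem (hu j hj) _,
    indicator_of_mem hv, indicator_of_notMem hw]
  ring

end StdHyp

def nestedIco (a : ℕ → ℝ) (N n K : ℕ) : Set ℝ :=
  Ico ((u a N 1)^[K] (b a n)) ((u a N 1)^[K] (b a n + 2 * a (n + 1)))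

section Nested

variable {a : ℕ → ℝ} (ha : StdHyp a) {N : ℕ} (hN : 0 < N)
include ha hN

lemma lenJ_div_pos : 0 < lenJ a / N := div_pos (lenJ_pos ha) (by exact_mod_cast hN)

lemma u_one_strictMono : StrictMono (u a N 1) := fun x y hxy => by
  have := lenJ_div_pos ha hN
  simp only [u, Nat.cast_one, sub_self, zero_mul, add_zero]
  gcongr

lemma mapsTo_u_one_Icc : MapsTo (u a N 1) (Icc 0 1) (Icc (binf a) (binf a + lenJ a / N)) :=
  fun x ⟨hx0, hx1⟩ => by
    have := lenJ_div_pos ha hN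
    simp only [u, Nat.cast_one, sub_self, zero_mul, add_zero]
    constructor <;> nlinarith

lemma nestedIco_endpoints_mem (n K : ℕ) :
    (u a N 1)^[K] (b a n) ∈ Icc 0 1 ∧ (u a N 1)^[K] (b a n + 2 * a (n + 1)) ∈ Icc 0 1 := by
  have hJ : Icc (binf a) (binf a + lenJ a / N) ⊆ Icc 0 1 := by
    refine Icc_subset_Icc (binf_nonneg ha) ?_
    have := div_le_self (lenJ_pos ha).le (show (1 : ℝ) ≤ N by exact_mod_cast hN)
    linarith [show lenJ a = 1 - binf a from rfl]
  have hmaps := ((mapsTo_u_one_Icc ha hN).mono_right hJ).iterate K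
  have hpos := ha.1 (n + 1) n.succ_pos
  have hb := b_le_binf ha (n + 1)
  rw [b_succ] at hb
  exact ⟨hmaps ⟨b_nonneg ha n, by linarith [binf_lt_one ha]⟩,
    hmaps ⟨by linarith [b_nonneg ha n], by linarith [binf_lt_one ha]⟩⟩

lemma nestedIco_succ_subset (n K : ℕ) :
    nestedIco a N n (K + 1) ⊆ Ico (binf a) (binf a + lenJ a / N) := by
  obtain ⟨⟨hp, -⟩, ⟨-, hq⟩⟩ := nestedIco_endpoints_mem ha hN n K
  have h0 : u a N 1 0 = binf a := by simp [u]
  have h1 : u a N 1 1 = binf a + lenJ a / N := by simp [u]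
  rw [nestedIco, Function.iterate_succ_apply', Function.iterate_succ_apply', ← h1, ← h0]
  exact Ico_subset_Ico ((u_one_strictMono ha hN).monotone hp)
    ((u_one_strictMono ha hN).monotone hq)

lemma preimage_nestedIco_succ (n K : ℕ) :
    u a N 1 ⁻¹' nestedIco a N n (K + 1) = nestedIco a N n K := by
  ext x
  simp only [nestedIco, Function.iterate_succ_apply', mem_preimage, mem_Ico,
    (u_one_strictMono ha hN).le_iff_le, (u_one_strictMono ha hN).lt_iff_lt]

lemma iterate_LR_indicator_nestedIco (n : ℕ) :
    ∀ j i, EqOn ((LR a N)^[j] ((nestedIco a N n (i + j)).indicator 1))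
      ((nestedIco a N n i).indicator fun _ => (lenJ a / N) ^ j) (Ico 0 1)
  | 0, i => fun _ _ => rfl
  | j + 1, i => fun x hx => by
    rw [Function.iterate_succ_apply', show i + (j + 1) = i + 1 + j by omega,
      LR_eqOn_of_eqOn ha N (iterate_LR_indicator_nestedIco n j (i + 1)) hx,
      LR_indicator_eqOn_of_subset_Ico_binf ha hN (nestedIco_succ_subset ha hN n i) _ hx,
      preimage_nestedIco_succ ha hN, pow_succ']

lemma iterate_succ_LR_indicator_nestedIco (n K : ℕ) :
    EqOn ((LR a N)^[K + 1] ((nestedIco a N n K).indicator 1))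
      (fun x => (lenJ a / N) ^ K * vd a (n + 1) x) (Ico 0 1) := fun x hx => by
  have hK := iterate_LR_indicator_nestedIco ha hN n K 0
  rw [zero_add] at hK
  rw [Function.iterate_succ_apply', LR_eqOn_of_eqOn ha N hK hx]
  exact LR_indicator_Ico_b_eqOn ha N n _ hx

end Nested

section Oscillation

variable (a : ℕ → ℝ)

lemma vd_nat_div (n i : ℕ) (hn : n ≠ 0) : vd a n (i / (4 * n ^ 4)) = a n * (2 + (-1) ^ i) := by
  rw [vd_eq, show freq n * (i / (4 * n ^ 4)) = i * π by unfold freq; field_simp, cos_nat_mul_pi]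

lemma le_eVariationOn_mul_vd (c : ℝ) {n : ℕ} (hn : n ≠ 0) :
    ENNReal.ofReal (((4 * n ^ 4 - 1 : ℕ) : ℝ) * (2 * |c * a n|))
      ≤ eVariationOn (fun x => c * vd a n x) (Ico 0 1) := by
  obtain ⟨Q, hQ⟩ : ∃ Q, Q = 4 * n ^ 4 := ⟨_, rfl⟩
  rw [← hQ]
  have hQ0 : 0 < Q := by rw [hQ]; positivity
  have hQpos : (0 : ℝ) < Q := by exact_mod_cast hQ0
  have hgrid : ∀ i ∈ Icc 0 (Q - 1), (i : ℝ) / Q ∈ Ico 0 1 := fun i hi => by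
    refine ⟨by positivity, (div_lt_one hQpos).2 ?_⟩
    exact_mod_cast (show i < Q by have := hi.2; omega)
  have hmono : MonotoneOn (fun i : ℕ => (i : ℝ) / Q) (Icc 0 (Q - 1)) :=
    fun i _ j _ hij => div_le_div_of_nonneg_right (by exact_mod_cast hij) hQpos.le
  have hjump : ∀ i ∈ Finset.Ico 0 (Q - 1),
      edist (c * vd a n ((i + 1 : ℕ) / Q)) (c * vd a n (i / Q))
        = ENNReal.ofReal (2 * |c * a n|) :=
    fun i _ => by
      rw [hQ, Nat.cast_mul, Nat.cast_pow, Nat.cast_ofNat, vd_nat_div a _ _ hn,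
        vd_nat_div a _ _ hn, edist_dist, Real.dist_eq,
        show c * (a n * (2 + (-1) ^ (i + 1))) - c * (a n * (2 + (-1) ^ i))
          = (-1) ^ (i + 1) * (2 * (c * a n)) by ring,
        abs_mul, abs_pow, abs_neg, abs_one, one_pow, one_mul, abs_mul, abs_two]
  refine (eVariationOn.sum_le_of_monotoneOn_Icc (f := fun x => c * vd a n x) hmono hgrid).trans'
    (le_of_eq ?_)
  rw [Finset.sum_congr rfl hjump, Finset.sum_const, Nat.card_Ico, Nat.sub_zero, nsmul_eq_mul,
    ENNReal.ofReal_mul (by positivity), ENNReal.ofReal_natCast]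

end Oscillation

lemma aa_succ_le (n : ℕ) : aa (n + 1) ≤ 1 / 100 * (1 / ((n + 1 : ℕ) : ℝ) ^ 2) := by
  have hm : (1 : ℝ) ≤ (n + 1 : ℕ) := by exact_mod_cast n.succ_pos
  rw [aa, div_mul_div_comm, one_mul]
  gcongr
  norm_num

lemma stdHyp_aa : StdHyp aa := by
  have hζ : HasSum (fun n : ℕ => 1 / ((n + 1 : ℕ) : ℝ) ^ 2) (π ^ 2 / 6) := by
    simpa using (hasSum_nat_add_iff' 1).2 hasSum_zeta_two
  have hpos : ∀ n, 1 ≤ n → 0 < aa n := fun n hn => by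
    have : (0 : ℝ) < n := by exact_mod_cast hn
    unfold aa; positivity
  have hsum : Summable fun n => aa (n + 1) :=
    (hζ.summable.mul_left _).of_nonneg_of_le (fun n => (hpos _ n.succ_pos).le) aa_succ_le
  refine ⟨hpos, hsum, ?_⟩
  calc ∑' n, aa (n + 1) ≤ ∑' n : ℕ, 1 / 100 * (1 / ((n + 1 : ℕ) : ℝ) ^ 2) :=
        hsum.tsum_le_tsum aa_succ_le (hζ.summable.mul_left _)
    _ = 1 / 100 * (π ^ 2 / 6) := (hζ.mul_left _).tsum_eq
    _ < 1 / 4 := by nlinarith [pi_lt_four, pi_pos]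

lemma exists_lt_mul_aa {c : ℝ} (hc : 0 < c) (C : ℝ) :
    ∃ n : ℕ, C < ((4 * (n + 1) ^ 4 - 1 : ℕ) : ℝ) * (2 * |c * aa (n + 1)|) := by
  obtain ⟨n, hn⟩ := exists_nat_gt (50 * C / (3 * c))
  refine ⟨n, ?_⟩
  have hm : (1 : ℝ) ≤ n + 1 := by linarith [n.cast_nonneg (α := ℝ)]
  have hm4 : (1 : ℝ) ≤ (n + 1) ^ 4 := one_le_pow₀ hm
  rw [Nat.cast_sub (Nat.one_le_iff_ne_zero.2 (by positivity)),
    abs_of_pos (mul_pos hc (by unfold aa; positivity)), aa]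
  push_cast
  calc C < 3 * c * (n + 1) / 50 := by
        rw [div_lt_iff₀ (by positivity)] at hn; nlinarith
    _ ≤ (4 * (n + 1) ^ 4 - 1) * (2 * (c * (1 / (100 * (n + 1) ^ 3)))) := by
        rw [div_le_iff₀ (by norm_num)]
        field_simp
        nlinarith

/-- with `a_n = 1/(100 n³)` and `N = 4`, for every `k ≥ 1` and `C > 0`
there is `f` of bounded variation with `Var(f) + sup|f| ≤ 3` and `Var(L^k f) > C`. -/
theorem stmt16 :
    ∀ k : ℕ, 1 ≤ k → ∀ C : ℝ, 0 < C → ∃ f : ℝ → ℝ,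
      eVariationOn f (Ico (0:ℝ) 1) + (⨆ x : Ico (0:ℝ) 1, ENNReal.ofReal |f x.1|) ≤ 3 ∧
      ENNReal.ofReal C < eVariationOn ((LR aa 4)^[k] f) (Ico (0:ℝ) 1) := by
  intro k hk C hC
  obtain ⟨K, rfl⟩ : ∃ K, k = K + 1 := ⟨k - 1, by omega⟩
  have hN : 0 < 4 := by norm_num
  obtain ⟨n, hn⟩ := exists_lt_mul_aa (pow_pos (lenJ_div_pos stdHyp_aa hN) K) C
  refine ⟨(nestedIco aa 4 n K).indicator 1, ?_, ?_⟩
  · have hsup :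
        (⨆ x : Ico (0:ℝ) 1, ENNReal.ofReal |(nestedIco aa 4 n K).indicator 1 x.1|) ≤ 1 :=
      iSup_le fun x => by by_cases hx : x.1 ∈ nestedIco aa 4 n K <;> simp [hx]
    calc _ ≤ 2 + 1 := add_le_add (eVariationOn_indicator_Ico_le _ _) hsup
      _ = 3 := by norm_num
  · rw [eVariationOn.eq_of_eqOn (iterate_succ_LR_indicator_nestedIco stdHyp_aa hN n K)]
    refine lt_of_lt_of_le ?_ (le_eVariationOn_mul_vd aa _ n.succ_ne_zero)
    exact (ENNReal.ofReal_lt_ofReal_iff (hC.trans hn)).2 (by exact_mod_cast hn)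

end Gouezel
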